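/- For all integers r ≥ 4 and n with r ≤ n ≤ r+4, every n-vertex connected BP_4-free r-uniform hypergraph has at most 4 hyperedges. -/

import Mathlib

/-!
Call two edges thin if they share at most one vertex. Since `3r - 3 > r + 4`, no three edges are
pairwise thin, so any five edges contain four pairwise non-thin edges or two disjoint thin pairs.

Edges `a, b, c, d` carry a Berge path as soon as `a ∩ b`, `b ∩ c`, `c ∩ d` have distinct
representatives: the end vertices can then be taken from `a` and `d`, which have `r ≥ 4` vertices.
When `#(a ∩ b), #(b ∩ c) ≥ 2` and `c ∩ d ≠ ∅`, this fails only if the three intersections lie in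
one 2-set. For four pairwise non-thin edges, four orderings force all six pairwise intersections
into one 2-set, and then the edges cover `4r - 6 > r + 4` vertices. For thin pairs `{a, d}` and
`{b, c}`, a fifth edge `e` meets one edge of each pair, say `a` and `b`, in two vertices; a chain
`b, e, a, p` with `p` meeting `a` forces `#(e ∩ a) = 2` and `e ∩ a ⊆ b`, so `e \ a` meets `d`
and the chain `a, b, e, d` gives the path.
-/

namespace Berge

def IsBergePath {n : ℕ} (E : Finset (Finset (Fin n))) (k : ℕ)
    (v : Fin (k + 1) → Fin n) (f : Fin k → Finset (Fin n)) : Prop :=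
  Function.Injective v ∧ Function.Injective f ∧ (∀ i, f i ∈ E) ∧
    ∀ i : Fin k, v i.castSucc ∈ f i ∧ v i.succ ∈ f i

def HasBergePath {n : ℕ} (E : Finset (Finset (Fin n))) (k : ℕ) : Prop :=
  ∃ v f, IsBergePath E k v f

def BPFree {n : ℕ} (E : Finset (Finset (Fin n))) (k : ℕ) : Prop :=
  ¬ HasBergePath E k

def Connected {n : ℕ} (E : Finset (Finset (Fin n))) : Prop :=
  ∀ x y : Fin n, ∃ (k : ℕ) (v : Fin (k + 1) → Fin n) (f : Fin k → Finset (Fin n)),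
    IsBergePath E k v f ∧ (∃ i, v i = x) ∧ (∃ i, v i = y)

def Uniform {n : ℕ} (E : Finset (Finset (Fin n))) (r : ℕ) : Prop :=
  ∀ e ∈ E, e.card = r

noncomputable def exConn (n r k : ℕ) : ℕ :=
  sSup {m | ∃ E : Finset (Finset (Fin n)),
    Uniform E r ∧ Connected E ∧ BPFree E k ∧ E.card = m}

def IsBergeCycle {n : ℕ} (E : Finset (Finset (Fin n))) (k : ℕ)
    (v : Fin k → Fin n) (f : Fin k → Finset (Fin n)) : Prop :=
  Function.Injective v ∧ Function.Injective f ∧ (∀ i, f i ∈ E) ∧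
    ∀ i : Fin k, v i ∈ f i ∧ v ⟨(i.val + 1) % k, Nat.mod_lt _ i.pos⟩ ∈ f i

end Berge

open Finset

namespace Finset

variable {α : Type*} [DecidableEq α]

theorem card_inter_lt_of_card_eq_of_ne {s t : Finset α} (h : #s = #t) (hne : s ≠ t) :
    #(s ∩ t) < #s :=
  card_lt_card <| ssubset_iff_subset_ne.2
    ⟨inter_subset_left, fun h' => hne (eq_of_subset_of_card_le (inter_eq_left.1 h') h.ge)⟩

theorem exists_ne_of_two_le_card_union {s t : Finset α} (hs : s.Nonempty) (ht : t.Nonempty)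
    (h : 2 ≤ #(s ∪ t)) : ∃ x ∈ s, ∃ y ∈ t, x ≠ y := by
  by_contra! hst
  obtain ⟨x, hx⟩ := hs
  obtain ⟨y, hy⟩ := ht
  have hy' : ∀ z ∈ s ∪ t, z = y := by
    intro z hz
    rcases mem_union.1 hz with hz | hz
    exacts [hst z hz y hy, (hst x hx z hz).symm.trans (hst x hx y hy)]
  have := card_le_one.2 fun a ha b hb => (hy' a ha).trans (hy' b hb).symm
  omega

theorem exists_distinct_reps_or_eq {s t u : Finset α} (hs : 2 ≤ #s) (ht : 2 ≤ #t)
    (hu : u.Nonempty) :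
    (∃ x ∈ s, ∃ y ∈ t, ∃ z ∈ u, [x, y, z].Nodup) ∨ (t = s ∧ u ⊆ s ∧ #s = 2) := by
  by_cases hst : 3 ≤ #(s ∪ t)
  · obtain ⟨z, hz⟩ := hu
    have hs' : (s.erase z).Nonempty := card_pos.1 (by grind [pred_card_le_card_erase])
    have ht' : (t.erase z).Nonempty := card_pos.1 (by grind [pred_card_le_card_erase])
    obtain ⟨x, hx, y, hy, hxy⟩ := exists_ne_of_two_le_card_union hs' ht'
      (by rw [← erase_union_distrib]; grind [pred_card_le_card_erase])
    exact .inl ⟨x, mem_of_mem_erase hx, y, mem_of_mem_erase hy, z, hz,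
      by simp [hxy, ne_of_mem_erase hx, ne_of_mem_erase hy]⟩
  · have hs_eq : s ∪ t = s := (eq_of_subset_of_card_le subset_union_left (by omega)).symm
    have hts : t = s :=
      (eq_of_subset_of_card_le subset_union_right (by omega)).trans hs_eq
    subst t
    rw [union_self] at hst
    by_cases hus : u ⊆ s
    · exact .inr ⟨rfl, hus, by omega⟩
    · obtain ⟨z, hz, hzs⟩ := not_subset.1 hus
      obtain ⟨x, hx, y, hy, hxy⟩ := one_lt_card.1 hs
      refine .inl ⟨x, hx, y, hy, z, hz, ?_⟩
      simp [hxy, ne_of_mem_of_not_mem hx hzs, ne_of_mem_of_not_mem hy hzs]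

theorem card_le_four_of_triangleFree_indepFree_matchingFree (s : Finset α) (T : α → α → Prop)
    (htri : ∀ x ∈ s, ∀ y ∈ s, ∀ z ∈ s, [x, y, z].Nodup → T x y → T x z → T y z → False)
    (hindep : ∀ a ∈ s, ∀ b ∈ s, ∀ c ∈ s, ∀ d ∈ s, [a, b, c, d].Nodup →
      ¬T a b → ¬T a c → ¬T a d → ¬T b c → ¬T b d → ¬T c d → False)
    (hmatch : ∀ a ∈ s, ∀ b ∈ s, ∀ c ∈ s, ∀ d ∈ s, [a, b, c, d].Nodup → T a b → T c d → False) :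
    #s ≤ 4 := by
  by_contra! hs
  have neighbor : ∀ x ∈ s, ∀ R ⊆ s, x ∉ R → 2 < #R →
      (R : Set α).Pairwise (fun y z => ¬T y z) → ∃ y ∈ R, T x y := by
    intro x hx R hRs hxR hR hfree
    obtain ⟨b, c, d, hb, hc, hd, hbc, hbd, hcd⟩ := two_lt_card_iff.1 hR
    by_contra! hx'
    exact hindep x hx b (hRs hb) c (hRs hc) d (hRs hd) (by aesop)
      (hx' b hb) (hx' c hc) (hx' d hd) (hfree hb hc hbc) (hfree hb hd hbd) (hfree hc hd hcd)
  obtain ⟨a, ha, d, hd, had, hTad⟩ : ∃ a ∈ s, ∃ d ∈ s, a ≠ d ∧ T a d := by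
    by_contra! hfree
    obtain ⟨a, ha⟩ := card_pos.1 (by omega : 0 < #s)
    obtain ⟨d, hd, hTad⟩ := neighbor a ha (s.erase a) (erase_subset a s) (notMem_erase a s)
      (by grind [card_erase_of_mem])
      (fun y hy z hz hyz => hfree y (mem_of_mem_erase hy) z (mem_of_mem_erase hz) hyz)
    exact hfree a ha d (mem_of_mem_erase hd) (ne_of_mem_erase hd).symm hTad
  set R := (s.erase a).erase d
  have hRs : R ⊆ s := (erase_subset _ _).trans (erase_subset _ _)
  have hR : 2 < #R := by grind [card_erase_of_mem]
  have haR : a ∉ R := by simp [R]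
  have hdR : d ∉ R := by simp [R]
  -- Without a `T`-pair inside `R`, both `a` and `d` have a `T`-neighbour in `R`: a common one
  -- closes a triangle, distinct ones give a second `T`-pair disjoint from the first.
  by_cases hfree : (R : Set α).Pairwise (fun y z => ¬T y z)
  · obtain ⟨u, hu, hau⟩ := neighbor a ha R hRs haR hR hfree
    obtain ⟨w, hw, hdw⟩ := neighbor d hd R hRs hdR hR hfree
    obtain rfl | huw := eq_or_ne u w
    · exact htri a ha d hd u (hRs hu) (by simp [had, (ne_of_mem_of_not_mem hu haR).symm,
        (ne_of_mem_of_not_mem hu hdR).symm]) hTad hau hdw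
    · exact hmatch a ha u (hRs hu) d hd w (hRs hw) (by aesop) hau hdw
  · simp only [Set.Pairwise, mem_coe, not_forall, not_not] at hfree
    obtain ⟨b, hb, c, hc, hbc, hTbc⟩ := hfree
    exact hmatch a ha d hd b (hRs hb) c (hRs hc) (by aesop) hTad hTbc

variable [Fintype α]

theorem card_add_card_add_card_le (s t u : Finset α) :
    #s + #t + #u ≤ Fintype.card α + #(s ∩ t) + #(s ∩ u) + #(t ∩ u) := by
  have h₁ := card_union_add_card_inter s t
  have h₂ := card_union_add_card_inter (s ∪ t) u
  have h₃ : #((s ∪ t) ∩ u) ≤ #(s ∩ u) + #(t ∩ u) := by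
    rw [union_inter_distrib_right]
    exact card_union_le _ _
  have h₄ := card_le_univ (s ∪ t ∪ u)
  omega

theorem card_add_card_add_card_add_card_le_of_inter_subset {a b c d k : Finset α}
    (hab : a ∩ b ⊆ k) (hac : a ∩ c ⊆ k) (had : a ∩ d ⊆ k) (hbc : b ∩ c ⊆ k) (hbd : b ∩ d ⊆ k)
    (hcd : c ∩ d ⊆ k) :
    #a + #b + #c + #d ≤ Fintype.card α + 3 * #k := by
  have h₁ := card_union_add_card_inter a b
  have h₂ := card_union_add_card_inter (a ∪ b) c
  have h₃ := card_union_add_card_inter (a ∪ b ∪ c) d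
  have h₄ := card_le_univ (a ∪ b ∪ c ∪ d)
  have h₅ := card_le_card hab
  have h₆ : #((a ∪ b) ∩ c) ≤ #k := card_le_card <| by
    rw [union_inter_distrib_right]
    exact union_subset hac hbc
  have h₇ : #((a ∪ b ∪ c) ∩ d) ≤ #k := card_le_card <| by
    simp only [union_inter_distrib_right]
    exact union_subset (union_subset had hbd) hcd
  omega

end Finset

namespace Berge

variable {n r : ℕ} {E : Finset (Finset (Fin n))}

theorem hasBergePath_four {v₁ v₂ v₃ v₄ v₅ : Fin n} {a b c d : Finset (Fin n)}
    (hv : [v₁, v₂, v₃, v₄, v₅].Nodup) (habcd : [a, b, c, d].Nodup)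
    (ha : a ∈ E) (hb : b ∈ E) (hc : c ∈ E) (hd : d ∈ E)
    (h₁ : v₁ ∈ a) (h₂ : v₂ ∈ a ∩ b) (h₃ : v₃ ∈ b ∩ c) (h₄ : v₄ ∈ c ∩ d) (h₅ : v₅ ∈ d) :
    HasBergePath E 4 := by
  rw [mem_inter] at h₂ h₃ h₄
  refine ⟨![v₁, v₂, v₃, v₄, v₅], ![a, b, c, d], List.nodup_ofFn.1 (by simpa using hv),
    List.nodup_ofFn.1 (by simpa using habcd), fun i => ?_, fun i => ?_⟩
  · fin_cases i <;> assumption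
  · fin_cases i
    exacts [⟨h₁, h₂.1⟩, ⟨h₂.2, h₃.1⟩, ⟨h₃.2, h₄.1⟩, ⟨h₄.2, h₅⟩]

theorem hasBergePath_of_chain (hu : Uniform E r) (hr : 4 ≤ r) {a b c d : Finset (Fin n)}
    (ha : a ∈ E) (hb : b ∈ E) (hc : c ∈ E) (hd : d ∈ E) (habcd : [a, b, c, d].Nodup)
    {v₂ v₃ v₄ : Fin n} (h₂ : v₂ ∈ a ∩ b) (h₃ : v₃ ∈ b ∩ c) (h₄ : v₄ ∈ c ∩ d)
    (hv : [v₂, v₃, v₄].Nodup) :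
    HasBergePath E 4 := by
  set S : Finset (Fin n) := {v₂, v₃, v₄}
  have hS : #S ≤ 3 := card_le_three
  have ha' := hu a ha
  have hd' := hu d hd
  have hsd : ∀ x ∈ E, (x \ S).Nonempty := fun x hx =>
    card_pos.1 (by have := le_card_sdiff S x; have := hu x hx; omega)
  obtain ⟨v₁, h₁, v₅, h₅, h₁₅⟩ := exists_ne_of_two_le_card_union (hsd a ha) (hsd d hd) <| by
    have := card_inter_lt_of_card_eq_of_ne (ha'.trans hd'.symm) (by aesop : a ≠ d)
    have := card_union_add_card_inter a d
    have := le_card_sdiff S (a ∪ d)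
    rw [← union_sdiff_distrib]
    omega
  simp only [S, mem_sdiff, mem_insert, mem_singleton, not_or] at h₁ h₅
  exact hasBergePath_four (by aesop) habcd ha hb hc hd h₁.1 h₂ h₃ h₄ h₅.1

theorem BPFree.inter_eq_of_chain (hf : BPFree E 4) (hu : Uniform E r) (hr : 4 ≤ r)
    {a b c d : Finset (Fin n)} (ha : a ∈ E) (hb : b ∈ E) (hc : c ∈ E) (hd : d ∈ E)
    (habcd : [a, b, c, d].Nodup) (hab : 2 ≤ #(a ∩ b)) (hbc : 2 ≤ #(b ∩ c))
    (hcd : (c ∩ d).Nonempty) :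
    b ∩ c = a ∩ b ∧ c ∩ d ⊆ a ∩ b ∧ #(a ∩ b) = 2 := by
  obtain ⟨v₂, h₂, v₃, h₃, v₄, h₄, hv⟩ | h := exists_distinct_reps_or_eq hab hbc hcd
  · exact absurd (hasBergePath_of_chain hu hr ha hb hc hd habcd h₂ h₃ h₄ hv) hf
  · exact h

theorem two_le_card_inter_or_of_card_inter_le_one (hr : 4 ≤ r) (hn : n ≤ r + 4)
    {x y e : Finset (Fin n)} (hx : #x = r) (hy : #y = r) (he : #e = r)
    (hxy : #(x ∩ y) ≤ 1) :
    2 ≤ #(e ∩ x) ∨ 2 ≤ #(e ∩ y) := by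
  have := card_add_card_add_card_le e x y
  rw [Fintype.card_fin] at this
  omega

theorem hasBergePath_of_pairwise_two_le_card_inter (hu : Uniform E r) (hr : 4 ≤ r)
    (hn : n ≤ r + 4) {a b c d : Finset (Fin n)} (ha : a ∈ E) (hb : b ∈ E) (hc : c ∈ E)
    (hd : d ∈ E) (habcd : [a, b, c, d].Nodup) (hab : 2 ≤ #(a ∩ b)) (hac : 2 ≤ #(a ∩ c))
    (had : 2 ≤ #(a ∩ d)) (hbc : 2 ≤ #(b ∩ c)) (hbd : 2 ≤ #(b ∩ d)) (hcd : 2 ≤ #(c ∩ d)) :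
    HasBergePath E 4 := by
  by_contra hf
  change BPFree E 4 at hf
  have hba : 2 ≤ #(b ∩ a) := by rwa [inter_comm]
  have hcd' : (c ∩ d).Nonempty := card_pos.1 (by omega)
  have hdc' : (d ∩ c).Nonempty := by rwa [inter_comm]
  obtain ⟨hbc_eq, hcd_sub, hK⟩ := hf.inter_eq_of_chain hu hr ha hb hc hd habcd hab hbc hcd'
  obtain ⟨hac_eq, -, -⟩ := hf.inter_eq_of_chain hu hr hb ha hc hd (by aesop) hba hac hcd'
  obtain ⟨hbd_eq, -, -⟩ := hf.inter_eq_of_chain hu hr ha hb hd hc (by aesop) hab hbd hdc'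
  obtain ⟨had_eq, -, -⟩ := hf.inter_eq_of_chain hu hr hb ha hd hc (by aesop) hba had hdc'
  rw [inter_comm b a] at hac_eq had_eq
  have := card_add_card_add_card_add_card_le_of_inter_subset subset_rfl hac_eq.subset
    had_eq.subset hbc_eq.subset hbd_eq.subset hcd_sub
  rw [Fintype.card_fin, hu a ha, hu b hb, hu c hc, hu d hd, hK] at this
  omega

theorem hasBergePath_of_card_inter_le_one_of_two_le (hu : Uniform E r) (hr : 4 ≤ r)
    (hn : n ≤ r + 4) {a d b c e : Finset (Fin n)} (ha : a ∈ E) (hd : d ∈ E) (hb : b ∈ E)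
    (hc : c ∈ E) (he : e ∈ E) (hadbce : [a, d, b, c, e].Nodup) (had : #(a ∩ d) ≤ 1)
    (hea : 2 ≤ #(e ∩ a)) (heb : 2 ≤ #(e ∩ b)) :
    HasBergePath E 4 := by
  by_contra hf
  change BPFree E 4 at hf
  have ha' := hu a ha
  have hd' := hu d hd
  -- an edge disjoint from `a` is its complement, so `d` and `c` are not both disjoint from `a`
  obtain ⟨p, hp, hbeap, hap⟩ : ∃ p ∈ E, [b, e, a, p].Nodup ∧ (a ∩ p).Nonempty := by
    by_contra! hdisj
    have h₁ := card_add_card_add_card_le a d c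
    have h₂ := card_inter_lt_of_card_eq_of_ne (hd'.trans (hu c hc).symm) (by aesop : d ≠ c)
    rw [Fintype.card_fin, hdisj d hd (by aesop), hdisj c hc (by aesop), card_empty, hu c hc]
      at h₁
    omega
  obtain ⟨hea_eq, -, hK⟩ :=
    hf.inter_eq_of_chain hu hr hb he ha hp hbeap (by rwa [inter_comm]) hea hap
  obtain ⟨q, hq⟩ : ((e \ a) ∩ d).Nonempty := by
    have h₁ := card_add_card_add_card_le (e \ a) a d
    have h₂ := card_sdiff_add_card_inter e a
    rw [sdiff_inter_self, card_empty, Fintype.card_fin] at h₁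
    rw [hea_eq, hK, hu e he] at h₂
    exact card_pos.1 (by omega)
  simp only [mem_inter, mem_sdiff] at hq
  obtain ⟨⟨hqe, hqa⟩, hqd⟩ := hq
  have hab : 2 ≤ #(a ∩ b) := hea.trans <| card_le_card <|
    subset_inter inter_subset_right (hea_eq.trans_subset inter_subset_left)
  obtain ⟨-, hsub, -⟩ := hf.inter_eq_of_chain hu hr ha hb he hd (by aesop) hab
    (by rwa [inter_comm]) ⟨q, mem_inter.2 ⟨hqe, hqd⟩⟩
  exact hqa (mem_inter.1 (hsub (mem_inter.2 ⟨hqe, hqd⟩))).1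

theorem hasBergePath_of_two_card_inter_le_one (hu : Uniform E r) (hr : 4 ≤ r)
    (hn : n ≤ r + 4) {a d b c e : Finset (Fin n)} (ha : a ∈ E) (hd : d ∈ E) (hb : b ∈ E)
    (hc : c ∈ E) (he : e ∈ E) (hadbce : [a, d, b, c, e].Nodup) (had : #(a ∩ d) ≤ 1)
    (hbc : #(b ∩ c) ≤ 1) :
    HasBergePath E 4 := by
  have path := @hasBergePath_of_card_inter_le_one_of_two_le _ _ _ hu hr hn
  have thick := @two_le_card_inter_or_of_card_inter_le_one _ _ hr hn
  have hda : #(d ∩ a) ≤ 1 := by rwa [inter_comm]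
  rcases thick (hu a ha) (hu d hd) (hu e he) had with hea | hed <;>
    rcases thick (hu b hb) (hu c hc) (hu e he) hbc with heb | hec
  · exact path ha hd hb hc he hadbce had hea heb
  · exact path ha hd hc hb he (by aesop) had hea hec
  · exact path hd ha hb hc he (by aesop) hda hed heb
  · exact path hd ha hc hb he (by aesop) hda hed hec

theorem stmt3 (r n : ℕ) (hr : 4 ≤ r) (hn2 : n ≤ r + 4)
    (E : Finset (Finset (Fin n))) (hu : Uniform E r)
    (hf : BPFree E 4) : E.card ≤ 4 := by
  by_contra! hE
  refine (card_le_four_of_triangleFree_indepFree_matchingFree E (fun x y => #(x ∩ y) ≤ 1)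
    ?_ ?_ ?_).not_gt hE
  · intro x hx y hy z hz _ hxy hxz hyz
    have := two_le_card_inter_or_of_card_inter_le_one hr hn2 (hu y hy) (hu z hz) (hu x hx) hyz
    omega
  · intro a ha b hb c hc d hd habcd hab hac had hbc hbd hcd
    exact hf <| hasBergePath_of_pairwise_two_le_card_inter hu hr hn2 ha hb hc hd habcd
      (not_le.1 hab) (not_le.1 hac) (not_le.1 had) (not_le.1 hbc) (not_le.1 hbd) (not_le.1 hcd)
  · intro a ha d hd b hb c hc hadbc had hbc
    obtain ⟨e, he, he'⟩ := exists_mem_notMem_of_card_lt_card (s := {a, d, b, c}) <|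
      card_le_four.trans_lt hE
    exact hf <| hasBergePath_of_two_card_inter_le_one hu hr hn2 ha hd hb hc he (by aesop) had hbc

end Berge
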